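/- arXiv:1505.01359 — 4 statements merged into one kernel-verified Lean document; each statement's English description precedes it below -/
import Mathlib

section
/- The partial order S_{n+1}^s of finite sequences over {0,...,n} with the strong gap-embeddability relation is order-isomorphic to the product S_n^s × (S_n^s)^*, where (S_n^s)^* carries the Higman ordering induced by the strong gap-embeddability relation on S_n^s. -/
/-- The strong gap-embeddability relation on finite sequences of naturals. -/
def gapS (s t : List ℕ) : Prop :=
  ∃ f : Fin s.length → Fin t.length, StrictMono f ∧
    (∀ i : Fin s.length, s.get i = t.get (f i)) ∧
    (∀ i : Fin s.length, ∀ hi : (i : ℕ) + 1 < s.length, ∀ j : Fin t.length,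
      f i < j → j < f ⟨(i : ℕ) + 1, hi⟩ → s.get ⟨(i : ℕ) + 1, hi⟩ ≤ t.get j) ∧
    (∀ hs : 0 < s.length, ∀ j : Fin t.length, j < f ⟨0, hs⟩ → s.get ⟨0, hs⟩ ≤ t.get j)

/-- The Higman ordering on finite sequences over a partial order `r`. -/
def Higman {X : Type*} (r : X → X → Prop) (u v : List X) : Prop :=
  ∃ f : Fin u.length → Fin v.length, StrictMono f ∧
    ∀ i : Fin u.length, r (u.get i) (v.get (f i))

/-- Sequences over `{0, …, n-1}`. -/
def SeqN (n : ℕ) := {l : List ℕ // ∀ x ∈ l, x < n}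

/-! Both orders are governed by the same recursion on heads: an embedding of `a :: u` into
`b :: v` either matches `a` with `b` or skips `b`, and `≤_gap^s` allows skipping `b` only when
`a ≤ b`. In `s = s₀⁺ 0 s₁⁺ 0 ⋯ 0 sₖ⁺` a positive entry can therefore never skip a `0`, and a `0`
can only be matched with a `0`. Hence `s₀⁺` embeds into the first block of the target, and the
`0`-headed blocks `0 sᵢ⁺` embed block by block, each into a later block: this is the product
of `≤_gap^s` with the Higman order on the remaining blocks. -/

theorem Fin.exists_eq_cons_zero_or_eq_succ_comp {m k : ℕ} {f : Fin (m + 1) → Fin (k + 1)}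
    (hf : StrictMono f) :
    (∃ g : Fin m → Fin k, f = Fin.cons 0 (Fin.succ ∘ g)) ∨ ∃ g, f = Fin.succ ∘ g := by
  by_cases h0 : f 0 = 0
  · left
    refine ⟨fun i => (f i.succ).pred (ne_bot_of_gt (h0 ▸ hf (Fin.succ_pos i))), ?_⟩
    ext i
    cases i using Fin.cases <;> simp [h0]
  · right
    have hne (i : Fin (m + 1)) : f i ≠ 0 := fun h =>
      h0 (le_antisymm (h ▸ hf.monotone (Fin.zero_le i)) (Fin.zero_le _))
    refine ⟨fun i => (f i).pred (hne i), ?_⟩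
    ext i
    simp

section GapEmbedding

variable {X : Type*} (r gap : X → X → Prop)

/-- The gap condition is stated uniformly in `i`: the entries skipped just before `f i` are the
`v j` with `j < f i` and `j` above all earlier `f l` (so every `j < f 0` when `i = 0`). -/
def IsGapEmbedding {m k : ℕ} (u : Fin m → X) (v : Fin k → X) (f : Fin m → Fin k) : Prop :=
  StrictMono f ∧ (∀ i, r (u i) (v (f i))) ∧
    ∀ i j, j < f i → (∀ l < i, f l < j) → gap (u i) (v j)

def GapEmbeds (u v : List X) : Prop := ∃ f, IsGapEmbedding r gap u.get v.get f

variable {r gap}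

theorem isGapEmbedding_succ_comp {m k : ℕ} {a b : X} {u : Fin m → X} {v : Fin k → X}
    {g : Fin (m + 1) → Fin k} :
    IsGapEmbedding r gap (Fin.cons a u) (Fin.cons b v) (Fin.succ ∘ g) ↔
      gap a b ∧ IsGapEmbedding r gap (Fin.cons a u) v g := by
  simp [IsGapEmbedding, StrictMono, Fin.forall_fin_succ]
  tauto

theorem isGapEmbedding_cons_zero_succ_comp {m k : ℕ} {a b : X} {u : Fin m → X} {v : Fin k → X}
    {g : Fin m → Fin k} :
    IsGapEmbedding r gap (Fin.cons a u) (Fin.cons b v) (Fin.cons 0 (Fin.succ ∘ g)) ↔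
      r a b ∧ IsGapEmbedding r gap u v g := by
  simp [IsGapEmbedding, StrictMono, Fin.forall_fin_succ]
  tauto

theorem List.get_cons_eq_fin_cons (a : X) (u : List X) : (a :: u).get = Fin.cons a u.get := by
  funext i
  cases i using Fin.cases <;> rfl

theorem gapEmbeds_nil_left (v : List X) : GapEmbeds r gap [] v :=
  ⟨Fin.elim0, fun i => i.elim0, fun i => i.elim0, fun i => i.elim0⟩

theorem not_gapEmbeds_cons_nil (a : X) (u : List X) : ¬ GapEmbeds r gap (a :: u) [] :=
  fun ⟨f, _⟩ => (f 0).elim0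

theorem gapEmbeds_cons_cons {a b : X} {u v : List X} :
    GapEmbeds r gap (a :: u) (b :: v) ↔
      (r a b ∧ GapEmbeds r gap u v) ∨ (gap a b ∧ GapEmbeds r gap (a :: u) v) := by
  simp only [GapEmbeds, List.get_cons_eq_fin_cons]
  constructor
  · rintro ⟨f, hf⟩
    rcases Fin.exists_eq_cons_zero_or_eq_succ_comp hf.1 with ⟨g, rfl⟩ | ⟨g, rfl⟩
    · exact .inl ((isGapEmbedding_cons_zero_succ_comp.1 hf).imp_right (⟨g, ·⟩))
    · exact .inr ((isGapEmbedding_succ_comp.1 hf).imp_right (⟨g, ·⟩))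
  · rintro (⟨hab, g, hg⟩ | ⟨hab, g, hg⟩)
    · exact ⟨_, isGapEmbedding_cons_zero_succ_comp.2 ⟨hab, hg⟩⟩
    · exact ⟨_, isGapEmbedding_succ_comp.2 ⟨hab, hg⟩⟩

theorem gapEmbeds_map_iff {Y : Type*} (g : Y → X) (u v : List Y) :
    GapEmbeds r gap (u.map g) (v.map g) ↔
      GapEmbeds (fun a b => r (g a) (g b)) (fun a b => gap (g a) (g b)) u v := by
  induction v generalizing u with
  | nil => cases u <;> simp [gapEmbeds_nil_left, not_gapEmbeds_cons_nil]
  | cons b v ih =>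
    cases u with
    | nil => simp [gapEmbeds_nil_left]
    | cons a u =>
      rw [List.map_cons, List.map_cons, gapEmbeds_cons_cons, ih, ← List.map_cons, ih,
        gapEmbeds_cons_cons]

end GapEmbedding

theorem gapS_iff_gapEmbeds (s t : List ℕ) : gapS s t ↔ GapEmbeds (· = ·) (· ≤ ·) s t := by
  refine exists_congr fun f => and_congr_right fun hf => and_congr_right fun _ => ?_
  constructor
  · rintro ⟨hstep, hfirst⟩ ⟨_ | i, hi⟩ j hji hprev
    · exact hfirst hi j hji
    · exact hstep ⟨i, by omega⟩ hi j (hprev _ (Fin.mk_lt_mk.2 (Nat.lt_succ_self i))) hji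
  · intro h
    refine ⟨fun i hi j hij hji => h _ j hji fun l hl => ?_,
      fun hs j hj => h _ j hj fun l hl => ?_⟩
    · exact (hf.monotone (Fin.le_iff_val_le_val.2 (Nat.lt_succ_iff.1 hl))).trans_lt hij
    · exact (Nat.not_lt_zero _ hl).elim

theorem higman_iff_gapEmbeds {X : Type*} (r : X → X → Prop) (u v : List X) :
    Higman r u v ↔ GapEmbeds r (fun _ _ => True) u v :=
  exists_congr fun _ =>
    ⟨fun ⟨hf, hr⟩ => ⟨hf, hr, fun _ _ _ _ => trivial⟩, fun ⟨hf, hr, _⟩ => ⟨hf, hr⟩⟩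

theorem gapS_nil_left (t : List ℕ) : gapS [] t :=
  (gapS_iff_gapEmbeds _ _).2 (gapEmbeds_nil_left _)

theorem not_gapS_cons_nil (a : ℕ) (s : List ℕ) : ¬ gapS (a :: s) [] :=
  mt (gapS_iff_gapEmbeds _ _).1 (not_gapEmbeds_cons_nil _ _)

theorem gapS_cons_cons {a b : ℕ} {s t : List ℕ} :
    gapS (a :: s) (b :: t) ↔ (a = b ∧ gapS s t) ∨ (a ≤ b ∧ gapS (a :: s) t) := by
  simp only [gapS_iff_gapEmbeds, gapEmbeds_cons_cons]

section Higman

variable {X : Type*} {r : X → X → Prop}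

theorem higman_nil_left (v : List X) : Higman r [] v :=
  (higman_iff_gapEmbeds _ _ _).2 (gapEmbeds_nil_left _)

theorem not_higman_cons_nil (a : X) (u : List X) : ¬ Higman r (a :: u) [] :=
  mt (higman_iff_gapEmbeds _ _ _).1 (not_gapEmbeds_cons_nil _ _)

theorem higman_cons_cons {a b : X} {u v : List X} :
    Higman r (a :: u) (b :: v) ↔ (r a b ∧ Higman r u v) ∨ Higman r (a :: u) v := by
  simp only [higman_iff_gapEmbeds, gapEmbeds_cons_cons, true_and]

theorem higman_map_iff {Y : Type*} (g : Y → X) (u v : List Y) :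
    Higman r (u.map g) (v.map g) ↔ Higman (fun a b => r (g a) (g b)) u v := by
  simp only [higman_iff_gapEmbeds, gapEmbeds_map_iff]

end Higman

/-- `zeroJoin a [b₁, …, bₖ] = a⁺ 0 b₁⁺ 0 ⋯ 0 bₖ⁺`. -/
def zeroJoin : List ℕ → List (List ℕ) → List ℕ
  | a, [] => a.map (· + 1)
  | a, b :: L => a.map (· + 1) ++ 0 :: zeroJoin b L

theorem zeroJoin_cons (x : ℕ) (a : List ℕ) (L : List (List ℕ)) :
    zeroJoin (x :: a) L = (x + 1) :: zeroJoin a L := by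
  cases L <;> rfl

theorem zeroJoin_nil_nil : zeroJoin [] [] = [] := rfl

theorem zeroJoin_nil_cons (b : List ℕ) (L : List (List ℕ)) :
    zeroJoin [] (b :: L) = 0 :: zeroJoin b L := rfl

theorem gapS_zero_cons_succ_cons {y : ℕ} {s t : List ℕ} :
    gapS (0 :: s) ((y + 1) :: t) ↔ gapS (0 :: s) t := by
  simp [gapS_cons_cons]

theorem gapS_zeroJoin_iff :
    ∀ (a : List ℕ) (L : List (List ℕ)) (c : List ℕ) (M : List (List ℕ)),
      gapS (zeroJoin a L) (zeroJoin c M) ↔ gapS a c ∧ Higman gapS L M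
  | x :: a, L, y :: c, M => by
    have ih₁ := gapS_zeroJoin_iff a L c M
    have ih₂ := gapS_zeroJoin_iff (x :: a) L c M
    rw [zeroJoin_cons] at ih₂
    rw [zeroJoin_cons, zeroJoin_cons, gapS_cons_cons, gapS_cons_cons, ih₁, ih₂]
    simp only [Nat.add_right_cancel_iff, Nat.add_le_add_iff_right]
    tauto
  | x :: a, L, [], [] => by simp [zeroJoin_cons, zeroJoin_nil_nil, not_gapS_cons_nil]
  | x :: a, L, [], d :: M => by
    simp [zeroJoin_cons, zeroJoin_nil_cons, gapS_cons_cons, not_gapS_cons_nil]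
  | [], [], c, M => by simp [zeroJoin_nil_nil, gapS_nil_left, higman_nil_left]
  | [], b :: L, y :: c, M => by
    have ih := gapS_zeroJoin_iff [] (b :: L) c M
    rw [zeroJoin_nil_cons] at ih ⊢
    rw [zeroJoin_cons, gapS_zero_cons_succ_cons, ih]
    simp [gapS_nil_left]
  | [], b :: L, [], [] => by
    simp [zeroJoin_nil_cons, zeroJoin_nil_nil, not_gapS_cons_nil, not_higman_cons_nil]
  | [], b :: L, [], d :: M => by
    have ih₁ := gapS_zeroJoin_iff b L d M
    have ih₂ := gapS_zeroJoin_iff [] (b :: L) d M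
    rw [zeroJoin_nil_cons] at ih₂
    rw [zeroJoin_nil_cons, zeroJoin_nil_cons, gapS_cons_cons, ih₁, ih₂, higman_cons_cons]
    simp [gapS_nil_left]
termination_by a L c M => (zeroJoin a L).length + (zeroJoin c M).length
decreasing_by all_goals simp only [zeroJoin_cons, zeroJoin_nil_cons, List.length_cons]; omega

def zeroSplit : List ℕ → List ℕ × List (List ℕ)
  | [] => ([], [])
  | 0 :: s => ([], (zeroSplit s).1 :: (zeroSplit s).2)
  | (x + 1) :: s => (x :: (zeroSplit s).1, (zeroSplit s).2)

theorem zeroJoin_zeroSplit (s : List ℕ) : zeroJoin (zeroSplit s).1 (zeroSplit s).2 = s := by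
  induction s with
  | nil => rfl
  | cons x s ih =>
    cases x with
    | zero => exact congrArg (0 :: ·) ih
    | succ x => exact (zeroJoin_cons _ _ _).trans (congrArg _ ih)

theorem zeroSplit_zeroJoin (a : List ℕ) (L : List (List ℕ)) :
    zeroSplit (zeroJoin a L) = (a, L) := by
  induction L generalizing a with
  | nil => induction a with
    | nil => rfl
    | cons x a ih => simp [zeroJoin_cons, zeroSplit, ih]
  | cons b L ih => induction a with
    | nil => simp [zeroJoin_nil_cons, zeroSplit, ih]
    | cons x a iha => simp [zeroJoin_cons, zeroSplit, iha]

theorem forall_mem_zeroJoin_lt_succ {n : ℕ} (a : List ℕ) (L : List (List ℕ)) :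
    (∀ x ∈ zeroJoin a L, x < n + 1) ↔ (∀ x ∈ a, x < n) ∧ ∀ b ∈ L, ∀ x ∈ b, x < n := by
  induction L generalizing a with
  | nil => simp [zeroJoin]
  | cons b L ih =>
    simp only [Nat.lt_succ_iff] at ih
    simp [zeroJoin, ih, or_imp, forall_and]

def seqNEquiv (n : ℕ) : SeqN (n + 1) ≃ SeqN n × List (SeqN n) where
  toFun s :=
    have h := (forall_mem_zeroJoin_lt_succ _ _).1 ((zeroJoin_zeroSplit s.1).symm ▸ s.2)
    (⟨(zeroSplit s.1).1, h.1⟩, (zeroSplit s.1).2.attachWith _ h.2)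
  invFun p := ⟨zeroJoin p.1.1 (p.2.map Subtype.val), (forall_mem_zeroJoin_lt_succ _ _).2
    ⟨p.1.2, fun _ hb => by obtain ⟨b, -, rfl⟩ := List.mem_map.1 hb; exact b.2⟩⟩
  left_inv s := Subtype.ext <| by simp [zeroJoin_zeroSplit]
  right_inv p := by
    have h := zeroSplit_zeroJoin p.1.1 (p.2.map Subtype.val)
    ext1
    · exact Subtype.ext (congrArg Prod.fst h)
    · apply List.map_injective_iff.2 Subtype.val_injective
      simp [h]

/-- `S_{n+1}^s` is order-isomorphic to `S_n^s × (S_n^s)^*`,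
with the Higman ordering induced by `≤_gap^s` on the second factor. -/
theorem stmt1 (n : ℕ) :
    ∃ h : SeqN (n + 1) ≃ SeqN n × List (SeqN n),
      ∀ s t : SeqN (n + 1),
        gapS s.1 t.1 ↔
          (gapS (h s).1.1 (h t).1.1 ∧
            Higman (fun a b : SeqN n => gapS a.1 b.1) (h s).2 (h t).2) := by
  refine ⟨seqNEquiv n, fun s t => ?_⟩
  have key (p q : SeqN n × List (SeqN n)) :
      gapS ((seqNEquiv n).symm p).1 ((seqNEquiv n).symm q).1 ↔
        gapS p.1.1 q.1.1 ∧ Higman (fun a b : SeqN n => gapS a.1 b.1) p.2 q.2 :=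
    (gapS_zeroJoin_iff _ _ _ _).trans (and_congr_right' (higman_map_iff _ _ _))
  simpa only [Equiv.symm_apply_apply] using key (seqNEquiv n s) (seqNEquiv n t)
end

section
/- The map sending a sequence s_0...s_{k-1} over {0,...,n-1} to 0 s_0 ... s_{k-1} is a quasi-embedding from (S_n, ≤_{gap}^w) to (S_n[0], ≤_{gap}^w), where S_n[0] consists of sequences starting with 0 (or empty). -/
/-- The weak gap-embeddability relation on finite sequences of naturals. -/
def gapW (s t : List ℕ) : Prop :=
  ∃ f : Fin s.length → Fin t.length, StrictMono f ∧
    (∀ i : Fin s.length, s.get i = t.get (f i)) ∧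
    (∀ i : Fin s.length, ∀ hi : (i : ℕ) + 1 < s.length, ∀ j : Fin t.length,
      f i < j → j < f ⟨(i : ℕ) + 1, hi⟩ → s.get ⟨(i : ℕ) + 1, hi⟩ ≤ t.get j)

lemma StrictMono.apply_succ_ne_zero {m k : ℕ} {f : Fin (m + 1) → Fin (k + 1)}
    (hf : StrictMono f) (i : Fin m) : f i.succ ≠ 0 :=
  Fin.ne_zero_of_lt (hf i.succ_pos)

/-- Every letter after the first one of `a :: s` lands strictly after the head of `b :: t`, so
shifting the embedding down by one embeds `s` into `t`; the gap condition between the first two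
letters of `a :: s` is simply forgotten. -/
theorem gapW_of_gapW_cons_cons {a b : ℕ} {s t : List ℕ} :
    gapW (a :: s) (b :: t) → gapW s t := by
  rintro ⟨f, hmono, hval, hgap⟩
  have hne : ∀ i : Fin s.length, f i.succ ≠ 0 := hmono.apply_succ_ne_zero
  refine ⟨fun i => (f i.succ).pred (hne i), fun i j hij => ?_, fun i => ?_,
    fun i hi j hlo hhi => ?_⟩
  · exact Fin.pred_lt_pred_iff.2 (hmono (Fin.succ_lt_succ_iff.2 hij))
  · have h := hval i.succ
    rw [← Fin.succ_pred _ (hne i)] at h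
    exact h
  · exact hgap i.succ (Nat.succ_lt_succ hi) j.succ ((Fin.pred_lt_iff _).1 hlo)
      ((Fin.lt_pred_iff _).1 hhi)

theorem stmt2_general (s t : List ℕ) :
    gapW (0 :: s) (0 :: t) → gapW s t :=
  gapW_of_gapW_cons_cons

/-- Prepending `0` is a quasi-embedding from `(S_n, ≤_gap^w)` into `(S_n[0], ≤_gap^w)`. -/
theorem stmt2 (n : ℕ) (s t : List ℕ) (hs : ∀ x ∈ s, x < n) (ht : ∀ x ∈ t, x < n) :
    gapW (0 :: s) (0 :: t) → gapW s t :=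
  stmt2_general s t
end

section
/- If Ω₁·α + β < Ω₁·γ + δ with α, γ < ε₀ and β, δ < Ω₁ (Ω₁ the first uncountable ordinal), and β < ω^(ω^γ)·δ, then ω^(ω^α)·β < ω^(ω^γ)·δ. -/
open Ordinal Cardinal

/-- The least ordinal `ε` with `ω^ε = ε`. -/
noncomputable def eps0 : Ordinal := Ordinal.nfp (fun a => omega0 ^ a) 0

/-- The first uncountable ordinal. -/
noncomputable def Omega1 : Ordinal := (aleph 1).ord

/-! If `Ω₁·α + β < Ω₁·γ + δ` with `δ < Ω₁`, then `α ≤ γ` (the "digits" `β, δ` below `Ω₁`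
cannot make up for a smaller leading coefficient), and `α = γ` forces `β < δ`. In the first case
`ω^(ω^α)` is absorbed by `ω^(ω^γ)` on the left, so multiplying `β < ω^(ω^γ)·δ` by `ω^(ω^α)` gives
the claim; in the second case the claim is `ω^(ω^α)·β < ω^(ω^α)·δ`. -/

namespace Ordinal

theorem le_of_mul_add_lt_mul_add {a b c d e : Ordinal} (hd : d < c)
    (h : c * a + b < c * e + d) : a ≤ e := by
  have hc : 0 < c := zero_le.trans_lt hd
  have : c * a < c * (e + 1) :=
    calc c * a ≤ c * a + b := le_add_right le_rfl
      _ < c * e + d := h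
      _ ≤ c * e + c := add_le_add_right hd.le _
      _ = c * (e + 1) := (mul_add_one c e).symm
  exact Order.lt_add_one_iff.mp ((mul_lt_mul_iff_right₀ hc).mp this)

theorem omega0_opow_opow_mul_lt_of_lt {a b c d : Ordinal} (hac : a < c)
    (hb : b < ω ^ ω ^ c * d) : ω ^ ω ^ a * b < ω ^ ω ^ c * d := by
  have hpos : 0 < ω ^ ω ^ a := opow_pos _ omega0_pos
  have hω : ∀ {x y : Ordinal}, x < y → ω ^ x < ω ^ y :=
    (opow_lt_opow_iff_right one_lt_omega0).mpr
  have habsorb : ω ^ ω ^ a * ω ^ ω ^ c = ω ^ ω ^ c := mul_omega0_opow_opow hpos (hω (hω hac))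
  calc ω ^ ω ^ a * b < ω ^ ω ^ a * (ω ^ ω ^ c * d) := (mul_lt_mul_iff_right₀ hpos).mpr hb
    _ = ω ^ ω ^ c * d := by rw [← mul_assoc, habsorb]

end Ordinal

theorem stmt10_general (α β γ δ : Ordinal)
    (hδ : δ < Omega1)
    (h : Omega1 * α + β < Omega1 * γ + δ)
    (h2 : β < omega0 ^ (omega0 ^ γ) * δ) :
    omega0 ^ (omega0 ^ α) * β < omega0 ^ (omega0 ^ γ) * δ := by
  rcases (le_of_mul_add_lt_mul_add hδ h).lt_or_eq with hlt | rfl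
  · exact omega0_opow_opow_mul_lt_of_lt hlt h2
  · have hβδ : β < δ := (add_lt_add_iff_left _).mp h
    exact (mul_lt_mul_iff_right₀ (opow_pos _ omega0_pos)).mpr hβδ

/-- If `Ω₁·α + β < Ω₁·γ + δ` with `α, γ < ε₀`, `β, δ < Ω₁` and `β < ω^(ω^γ)·δ`,
then `ω^(ω^α)·β < ω^(ω^γ)·δ`. -/
theorem stmt10 (α β γ δ : Ordinal) (hα : α < eps0) (hγ : γ < eps0)
    (hβ : β < Omega1) (hδ : δ < Omega1)
    (h : Omega1 * α + β < Omega1 * γ + δ)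
    (h2 : β < omega0 ^ (omega0 ^ γ) * δ) :
    omega0 ^ (omega0 ^ α) * β < omega0 ^ (omega0 ^ γ) * δ :=
  stmt10_general α β γ δ hδ h h2
end

section
/- For ordinals below ε₀, the function f defined by f(0) = 0 and f(ω^α₁ + α₂) = ω^α₁ + f(α₁) + f(α₂) satisfies f(β) ≤ β·ω for every β. -/
open Ordinal

/-- Terms for ordinals below `ε₀`, built from `0` by `α ↦ ω^α` and `+`. -/
inductive ETerm : Type
  | zero : ETerm
  | omega : ETerm → ETerm
  | add : ETerm → ETerm → ETerm

/-- The ordinal value of a term. -/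
noncomputable def ETerm.val : ETerm → Ordinal
  | ETerm.zero => 0
  | ETerm.omega a => omega0 ^ ETerm.val a
  | ETerm.add a b => ETerm.val a + ETerm.val b

/-- `f(0) = 0`, `f(ω^α₁ + α₂) = ω^α₁ + f(α₁) + f(α₂)`. -/
noncomputable def ETerm.f : ETerm → Ordinal
  | ETerm.zero => 0
  | ETerm.omega a => omega0 ^ ETerm.val a + ETerm.f a
  | ETerm.add a b => ETerm.f a + ETerm.f b

/-!
The non-strict bound is not preserved by `+` (`ω·ω + 1·ω > (ω + 1)·ω`), so one proves the strict
bound `f b < γ·ω` for every `γ > 0` with `val b ≤ γ`, by induction on `b`. It is preserved because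
`γ·ω` is additively principal: the summands `ω^(val a) ≤ γ < γ·ω` and `f a < ω^(val a)·ω ≤ γ·ω`
of `f (ω^a)` lie below `γ·ω`, and so do those of `f (a + c)`.
-/

theorem Ordinal.isPrincipal_add_mul_omega0 (γ : Ordinal) : IsPrincipal (· + ·) (γ * ω) :=
  isPrincipal_add_mul_of_isPrincipal_add γ one_lt_omega0.ne' isPrincipal_add_omega0

namespace ETerm

theorem f_eq_zero_of_val_eq_zero : ∀ b : ETerm, b.val = 0 → b.f = 0
  | zero, _ => rfl
  | omega a, h => absurd h (opow_pos a.val omega0_pos).ne'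
  | add a c, h => by
    rw [val, Ordinal.add_eq_zero_iff] at h
    rw [f, f_eq_zero_of_val_eq_zero a h.1, f_eq_zero_of_val_eq_zero c h.2, add_zero]

theorem f_lt_mul_omega0_of_val_le (b : ETerm) {γ : Ordinal} (hγ : 0 < γ) (hb : b.val ≤ γ) :
    b.f < γ * ω := by
  induction b generalizing γ with
  | zero => exact mul_pos hγ omega0_pos
  | omega a ih =>
    have hpow : ω ^ a.val ≤ γ := hb
    refine isPrincipal_add_mul_omega0 γ
      (hpow.trans_lt (lt_mul_of_one_lt_right hγ one_lt_omega0)) ?_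
    calc a.f < ω ^ a.val * ω := ih (opow_pos _ omega0_pos) (right_le_opow _ one_lt_omega0)
      _ ≤ γ * ω := mul_le_mul_left hpow ω
  | add a c iha ihc =>
    have hsum : a.val + c.val ≤ γ := hb
    exact isPrincipal_add_mul_omega0 γ (iha hγ (le_self_add.trans hsum))
      (ihc hγ (le_add_self.trans hsum))

end ETerm

/-- `f(β) ≤ β·ω` for every `β` below `ε₀`. -/
theorem stmt13 (b : ETerm) : ETerm.f b ≤ ETerm.val b * omega0 := by
  rcases eq_or_ne (ETerm.val b) 0 with h | h
  · rw [ETerm.f_eq_zero_of_val_eq_zero b h, h, zero_mul]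
  · exact (b.f_lt_mul_omega0_of_val_le (pos_iff_ne_zero.2 h) le_rfl).le
end
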